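/- Let Ω be a finite basis for a category J, let C be a dagger category enriched in commutative monoids (each hom-set carries a commutative monoid structure and composition is biadditive), and D : J ⥤ C a diagram. A limit cone (L, (l_A : L ⟶ D A)) of D is a dagger limit of (D, Ω) if and only if 𝟙_L = Σ_{A ∈ Ω} l_A† ∘ l_A. -/

import Mathlib

/-!
Since `Ω` is a basis, `J` splits into components, one for each `A ∈ Ω` (the objects receiving a
morphism from `A`). The cone that is `l` on the component of `A` and `0` elsewhere induces an
endomorphism `E_A` of `L`; the `E_A` commute, sum to `𝟙 L`, and satisfy `E_A ∘ l_A = l_A` and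
`E_A ∘ l_B = 0` for `B ≠ A`. Both conditions of the theorem are equivalent to
`l_A† ∘ l_A = E_A` for all `A ∈ Ω`. For a dagger limit this holds on the legs at `Ω`, which
determine maps into `L`: the projections `l_A† ∘ l_A` are orthogonal, because they commute and
`E_B` kills one of them but fixes the other. Conversely, composing `𝟙 L = ∑ l_B† ∘ l_B` with
`E_A` leaves only `l_A† ∘ l_A`.
-/

open CategoryTheory

universe v u v₁ u₁ v₂ u₂

class DaggerCategory (C : Type u) [Category.{v} C] where
  dag : ∀ {A B : C}, (A ⟶ B) → (B ⟶ A)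
  dag_id : ∀ (A : C), dag (𝟙 A) = 𝟙 A
  dag_comp : ∀ {A B X : C} (f : A ⟶ B) (g : B ⟶ X), dag (f ≫ g) = dag g ≫ dag f
  dag_dag : ∀ {A B : C} (f : A ⟶ B), dag (dag f) = f

postfix:max "†" => DaggerCategory.dag

section Defs

variable {C : Type u} [Category.{v} C] [DaggerCategory C]

/-- A morphism `f` is a partial isometry if `f ∘ f† ∘ f = f`. -/
def IsPartialIsometry {A B : C} (f : A ⟶ B) : Prop :=
  f ≫ f† ≫ f = f

/-- A morphism `f : A ⟶ B` is unitary if `f† ∘ f = 𝟙 A` and `f ∘ f† = 𝟙 B`. -/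
def IsUnitary {A B : C} (f : A ⟶ B) : Prop :=
  f ≫ f† = 𝟙 A ∧ f† ≫ f = 𝟙 B

/-- A morphism `f` is dagger monic (an isometry) if `f† ∘ f = 𝟙`. -/
def DaggerMonic {A B : C} (f : A ⟶ B) : Prop :=
  f ≫ f† = 𝟙 A

/-- `(L, l)` is a limit cone over the diagram `D`. -/
def IsLimitCone {J : Type u₁} [Category.{v₁} J] (D : J ⥤ C) (L : C)
    (l : ∀ j : J, L ⟶ D.obj j) : Prop :=
  (∀ {j j' : J} (f : j ⟶ j'), l j ≫ D.map f = l j') ∧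
  (∀ (M : C) (m : ∀ j : J, M ⟶ D.obj j),
    (∀ {j j' : J} (f : j ⟶ j'), m j ≫ D.map f = m j') →
    ∃! g : M ⟶ L, ∀ j : J, g ≫ l j = m j)

/-- A class of objects `Ω` is weakly initial when every object admits a morphism
from some member of `Ω`. -/
def WeaklyInitial {J : Type u₁} [Category.{v₁} J] (Ω : Set J) : Prop :=
  ∀ B : J, ∃ A ∈ Ω, Nonempty (A ⟶ B)

/-- `(L, l)` is a dagger limit of `(D, Ω)`: a limit cone whose legs at `Ω` are
partial isometries with pairwise commuting induced projections. -/
def IsDaggerLimit {J : Type u₁} [Category.{v₁} J] (D : J ⥤ C) (Ω : Set J) (L : C)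
    (l : ∀ j : J, L ⟶ D.obj j) : Prop :=
  IsLimitCone D L l ∧
  (∀ j ∈ Ω, IsPartialIsometry (l j)) ∧
  (∀ j ∈ Ω, ∀ j' ∈ Ω,
    (l j ≫ (l j)†) ≫ (l j' ≫ (l j')†) = (l j' ≫ (l j')†) ≫ (l j ≫ (l j)†))

end Defs

/-- A class `Ω` of objects of `J` is a basis when every object `B` admits a unique `A ∈ Ω`
with `J(A, B)` nonempty. -/
def IsBasis {J : Type u₁} [Category.{v₁} J] (Ω : Set J) : Prop :=
  ∀ B : J, ∃! A : J, A ∈ Ω ∧ Nonempty (A ⟶ B)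

section Additive

variable {C : Type u} [Category.{v} C] [∀ X Y : C, AddCommMonoid (X ⟶ Y)] {ι : Type*}

theorem sum_comp_of_additive {X Y Z : C} (g : Y ⟶ Z)
    (hadd : ∀ f f' : X ⟶ Y, (f + f') ≫ g = f ≫ g + f' ≫ g) (hzero : (0 : X ⟶ Y) ≫ g = 0)
    (s : Finset ι) (f : ι → (X ⟶ Y)) :
    (∑ i ∈ s, f i) ≫ g = ∑ i ∈ s, f i ≫ g :=
  map_sum ({ toFun := (· ≫ g), map_zero' := hzero, map_add' := hadd } : (X ⟶ Y) →+ (X ⟶ Z)) f s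

theorem comp_sum_of_additive {X Y Z : C} (g : X ⟶ Y)
    (hadd : ∀ f f' : Y ⟶ Z, g ≫ (f + f') = g ≫ f + g ≫ f') (hzero : g ≫ (0 : Y ⟶ Z) = 0)
    (s : Finset ι) (f : ι → (Y ⟶ Z)) :
    g ≫ (∑ i ∈ s, f i) = ∑ i ∈ s, g ≫ f i :=
  map_sum ({ toFun := (g ≫ ·), map_zero' := hzero, map_add' := hadd } : (Y ⟶ Z) →+ (X ⟶ Z)) f s

end Additive

theorem comp_eq_zero_of_commute {C : Type u} [Category.{v} C] [∀ X Y : C, Zero (X ⟶ Y)]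
    {X : C} {e p q : X ⟶ X} (hzero : (0 : X ⟶ X) ≫ q = 0)
    (hp : e ≫ p = 0) (hq : e ≫ q = q) (hpq : p ≫ q = q ≫ p) : q ≫ p = 0 :=
  calc q ≫ p = e ≫ q ≫ p := by rw [← Category.assoc, hq]
    _ = e ≫ p ≫ q := by rw [hpq]
    _ = 0 := by rw [← Category.assoc, hp, hzero]

namespace IsBasis

variable {J : Type u₁} [Category.{v₁} J] {Ω : Set J}

theorem weaklyInitial (hΩ : IsBasis Ω) : WeaklyInitial Ω := fun B =>
  let ⟨A, hA, _⟩ := hΩ B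
  ⟨A, hA.1, hA.2⟩

theorem eq_of_nonempty_hom (hΩ : IsBasis Ω) {A A' j : J} (hA : A ∈ Ω) (hA' : A' ∈ Ω)
    (f : Nonempty (A ⟶ j)) (f' : Nonempty (A' ⟶ j)) : A = A' :=
  (hΩ j).unique ⟨hA, f⟩ ⟨hA', f'⟩

theorem nonempty_hom_iff_of_hom (hΩ : IsBasis Ω) {A j j' : J} (hA : A ∈ Ω) (f : j ⟶ j') :
    Nonempty (A ⟶ j) ↔ Nonempty (A ⟶ j') := by
  refine ⟨fun ⟨g⟩ => ⟨g ≫ f⟩, fun hj' => ?_⟩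
  obtain ⟨B, ⟨hB, ⟨g⟩⟩, -⟩ := hΩ j
  obtain rfl := hΩ.eq_of_nonempty_hom hB hA ⟨g ≫ f⟩ hj'
  exact ⟨g⟩

end IsBasis

namespace IsLimitCone

variable {C : Type u} [Category.{v} C] {J : Type u₁} [Category.{v₁} J] {D : J ⥤ C} {L : C}
  {l : ∀ j : J, L ⟶ D.obj j}

theorem hom_ext (hL : IsLimitCone D L l) {M : C} {g g' : M ⟶ L}
    (h : ∀ j, g ≫ l j = g' ≫ l j) : g = g' := by
  obtain ⟨u, -, hu⟩ := hL.2 M (fun j => g' ≫ l j) fun f => by rw [Category.assoc, hL.1 f]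
  exact (hu g h).trans (hu g' fun _ => rfl).symm

theorem hom_ext_of_weaklyInitial (hL : IsLimitCone D L l) {Ω : Set J} (hΩ : WeaklyInitial Ω)
    {M : C} {g g' : M ⟶ L} (h : ∀ A ∈ Ω, g ≫ l A = g' ≫ l A) : g = g' :=
  hL.hom_ext fun j => by
    obtain ⟨A, hA, ⟨f⟩⟩ := hΩ j
    rw [← hL.1 f, ← Category.assoc, ← Category.assoc, h A hA]

end IsLimitCone

open Classical in
/-- Over a basis, the objects under `A ∈ Ω` form the connected component of `A`; `e` cuts the
cone `l` down to that component. -/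
def IsComponentProj {C : Type u} [Category.{v} C] [∀ X Y : C, Zero (X ⟶ Y)]
    {J : Type u₁} [Category.{v₁} J] {D : J ⥤ C} {L : C} (l : ∀ j : J, L ⟶ D.obj j) (A : J)
    (e : L ⟶ L) : Prop :=
  ∀ j, e ≫ l j = if Nonempty (A ⟶ j) then l j else 0

namespace IsComponentProj

variable {C : Type u} [Category.{v} C] [∀ X Y : C, Zero (X ⟶ Y)] {J : Type u₁} [Category.{v₁} J]
  {D : J ⥤ C} {L : C} {l : ∀ j : J, L ⟶ D.obj j} {Ω : Set J}

theorem comp_self {A : J} {e : L ⟶ L} (he : IsComponentProj l A e) : e ≫ l A = l A := by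
  rw [he A, if_pos ⟨𝟙 A⟩]

theorem comp_eq_zero (hΩ : IsBasis Ω) {A B : J} (hA : A ∈ Ω) (hB : B ∈ Ω) (hne : A ≠ B)
    {e : L ⟶ L} (he : IsComponentProj l A e) : e ≫ l B = 0 := by
  rw [he B, if_neg fun f => hne (hΩ.eq_of_nonempty_hom hA hB f ⟨𝟙 B⟩)]

theorem exists_of_isLimitCone (hL : IsLimitCone D L l) (hΩ : IsBasis Ω)
    (hzero_comp : ∀ {X Y Z : C} (h : Y ⟶ Z), (0 : X ⟶ Y) ≫ h = 0) {A : J} (hA : A ∈ Ω) :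
    ∃ e, IsComponentProj l A e := by
  classical
  refine (hL.2 L (fun j => if Nonempty (A ⟶ j) then l j else 0) fun f => ?_).exists
  simp only [hΩ.nonempty_hom_iff_of_hom hA f]
  split_ifs
  · exact hL.1 f
  · exact hzero_comp _

theorem commute (hL : IsLimitCone D L l)
    (hcomp_zero : ∀ {X Y Z : C} (f : X ⟶ Y), f ≫ (0 : Y ⟶ Z) = 0) {A B : J} {e e' : L ⟶ L}
    (he : IsComponentProj l A e) (he' : IsComponentProj l B e') : e ≫ e' = e' ≫ e :=
  hL.hom_ext fun j => by
    by_cases hA : Nonempty (A ⟶ j) <;> by_cases hB : Nonempty (B ⟶ j) <;>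
      simp only [Category.assoc, he j, he' j, hA, hB, if_true, if_false, hcomp_zero]

end IsComponentProj

section Components

variable {C : Type u} [Category.{v} C] {J : Type u₁} [Category.{v₁} J] {D : J ⥤ C} {L : C}
  {l : ∀ j : J, L ⟶ D.obj j} {Ω : Set J}

theorem IsLimitCone.sum_eq_id_of_isComponentProj [∀ X Y : C, AddCommMonoid (X ⟶ Y)]
    (hadd_comp : ∀ {X Y Z : C} (f g : X ⟶ Y) (h : Y ⟶ Z), (f + g) ≫ h = f ≫ h + g ≫ h)
    (hzero_comp : ∀ {X Y Z : C} (h : Y ⟶ Z), (0 : X ⟶ Y) ≫ h = 0)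
    (hL : IsLimitCone D L l) (hΩ : IsBasis Ω) (hfin : Ω.Finite) {e : J → (L ⟶ L)}
    (he : ∀ A ∈ Ω, IsComponentProj l A (e A)) : ∑ A ∈ hfin.toFinset, e A = 𝟙 L :=
  hL.hom_ext fun j => by
    obtain ⟨A, ⟨hA, hAj⟩, -⟩ := hΩ j
    rw [sum_comp_of_additive _ (hadd_comp · · _) (hzero_comp _), Category.id_comp,
      Finset.sum_eq_single_of_mem A (hfin.mem_toFinset.2 hA), he A hA j, if_pos hAj]
    intro B hB hne
    have hB : B ∈ Ω := hfin.mem_toFinset.1 hB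
    rw [he B hB j, if_neg fun hBj => hne (hΩ.eq_of_nonempty_hom hB hA hBj hAj)]

variable [DaggerCategory C]

theorem IsLimitCone.isComponentProj_of_sum_eq_id [∀ X Y : C, AddCommMonoid (X ⟶ Y)]
    (hcomp_add : ∀ {X Y Z : C} (f : X ⟶ Y) (g h : Y ⟶ Z), f ≫ (g + h) = f ≫ g + f ≫ h)
    (hcomp_zero : ∀ {X Y Z : C} (f : X ⟶ Y), f ≫ (0 : Y ⟶ Z) = 0)
    (hzero_comp : ∀ {X Y Z : C} (h : Y ⟶ Z), (0 : X ⟶ Y) ≫ h = 0)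
    (hL : IsLimitCone D L l) (hΩ : IsBasis Ω) (hfin : Ω.Finite)
    (hsum : 𝟙 L = ∑ B ∈ hfin.toFinset, l B ≫ (l B)†) {A : J} (hA : A ∈ Ω) :
    IsComponentProj l A (l A ≫ (l A)†) := by
  obtain ⟨e, he⟩ := IsComponentProj.exists_of_isLimitCone hL hΩ hzero_comp hA
  suffices e = l A ≫ (l A)† from this ▸ he
  calc e = e ≫ ∑ B ∈ hfin.toFinset, l B ≫ (l B)† := by rw [← hsum, Category.comp_id]
    _ = ∑ B ∈ hfin.toFinset, e ≫ l B ≫ (l B)† :=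
      comp_sum_of_additive _ (hcomp_add e) (hcomp_zero e) _ _
    _ = l A ≫ (l A)† := by
      rw [Finset.sum_eq_single_of_mem A (hfin.mem_toFinset.2 hA), ← Category.assoc, he.comp_self]
      intro B hB hne
      rw [← Category.assoc, he.comp_eq_zero hΩ hA (hfin.mem_toFinset.1 hB) hne.symm, hzero_comp]

theorem sum_eq_id_iff_forall_isComponentProj [∀ X Y : C, AddCommMonoid (X ⟶ Y)]
    (hcomp_add : ∀ {X Y Z : C} (f : X ⟶ Y) (g h : Y ⟶ Z), f ≫ (g + h) = f ≫ g + f ≫ h)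
    (hadd_comp : ∀ {X Y Z : C} (f g : X ⟶ Y) (h : Y ⟶ Z), (f + g) ≫ h = f ≫ h + g ≫ h)
    (hcomp_zero : ∀ {X Y Z : C} (f : X ⟶ Y), f ≫ (0 : Y ⟶ Z) = 0)
    (hzero_comp : ∀ {X Y Z : C} (h : Y ⟶ Z), (0 : X ⟶ Y) ≫ h = 0)
    (hL : IsLimitCone D L l) (hΩ : IsBasis Ω) (hfin : Ω.Finite) :
    𝟙 L = ∑ A ∈ hfin.toFinset, l A ≫ (l A)† ↔ ∀ A ∈ Ω, IsComponentProj l A (l A ≫ (l A)†) :=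
  ⟨fun hsum _ => hL.isComponentProj_of_sum_eq_id hcomp_add hcomp_zero hzero_comp hΩ hfin hsum,
    fun h => (hL.sum_eq_id_of_isComponentProj hadd_comp hzero_comp hΩ hfin h).symm⟩

theorem IsDaggerLimit.isComponentProj [∀ X Y : C, Zero (X ⟶ Y)]
    (hzero_comp : ∀ {X Y Z : C} (h : Y ⟶ Z), (0 : X ⟶ Y) ≫ h = 0) (hΩ : IsBasis Ω)
    (hD : IsDaggerLimit D Ω L l) {A : J} (hA : A ∈ Ω) :
    IsComponentProj l A (l A ≫ (l A)†) := by
  obtain ⟨hL, hpi, hcomm⟩ := hD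
  obtain ⟨e, he⟩ := IsComponentProj.exists_of_isLimitCone hL hΩ hzero_comp hA
  suffices l A ≫ (l A)† = e from this ▸ he
  refine hL.hom_ext_of_weaklyInitial hΩ.weaklyInitial fun B hB => ?_
  obtain rfl | hne := eq_or_ne A B
  · rw [he.comp_self, Category.assoc]
    exact hpi A hA
  have horth : (l A ≫ (l A)†) ≫ (l B ≫ (l B)†) = 0 :=
    comp_eq_zero_of_commute (hzero_comp _)
      (by rw [← Category.assoc, he.comp_eq_zero hΩ hA hB hne, hzero_comp])
      (by rw [← Category.assoc, he.comp_self]) (hcomm B hB A hA)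
  calc (l A ≫ (l A)†) ≫ l B = ((l A ≫ (l A)†) ≫ (l B ≫ (l B)†)) ≫ l B := by
        simp only [Category.assoc, show l B ≫ (l B)† ≫ l B = l B from hpi B hB]
    _ = e ≫ l B := by rw [horth, hzero_comp, he.comp_eq_zero hΩ hA hB hne]

theorem isDaggerLimit_iff_forall_isComponentProj [∀ X Y : C, Zero (X ⟶ Y)]
    (hcomp_zero : ∀ {X Y Z : C} (f : X ⟶ Y), f ≫ (0 : Y ⟶ Z) = 0)
    (hzero_comp : ∀ {X Y Z : C} (h : Y ⟶ Z), (0 : X ⟶ Y) ≫ h = 0)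
    (hL : IsLimitCone D L l) (hΩ : IsBasis Ω) :
    IsDaggerLimit D Ω L l ↔ ∀ A ∈ Ω, IsComponentProj l A (l A ≫ (l A)†) := by
  refine ⟨fun hD A hA => hD.isComponentProj hzero_comp hΩ hA, fun h => ⟨hL, fun A hA => ?_,
    fun A hA B hB => (h A hA).commute hL hcomp_zero (h B hB)⟩⟩
  rw [IsPartialIsometry, ← Category.assoc]
  exact (h A hA).comp_self

end Components

/-- Let `Ω` be a finite basis for `J` and `C` a dagger category enriched in
commutative monoids (hom-sets are commutative monoids and composition is biadditive, with the
additive units being zero morphisms). A limit cone `(L, l)` of `D : J ⥤ C` is a dagger limit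
of `(D, Ω)` iff `𝟙 L = ∑_{A ∈ Ω} l_A† ∘ l_A`. -/
theorem daggerLimit_iff_sum_eq_id {C : Type u} [Category.{v} C] [DaggerCategory C]
    [∀ A B : C, AddCommMonoid (A ⟶ B)]
    (hcomp_add : ∀ {A B X : C} (f : A ⟶ B) (g h : B ⟶ X), f ≫ (g + h) = f ≫ g + f ≫ h)
    (hadd_comp : ∀ {A B X : C} (f g : A ⟶ B) (h : B ⟶ X), (f + g) ≫ h = f ≫ h + g ≫ h)
    (hcomp_zero : ∀ {A B X : C} (f : A ⟶ B), f ≫ (0 : B ⟶ X) = 0)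
    (hzero_comp : ∀ {A B X : C} (h : B ⟶ X), (0 : A ⟶ B) ≫ h = 0)
    {J : Type u₁} [Category.{v₁} J] (Ω : Set J) (hfin : Ω.Finite) (hΩ : IsBasis Ω)
    (D : J ⥤ C) {L : C} (l : ∀ j : J, L ⟶ D.obj j) (hL : IsLimitCone D L l) :
    IsDaggerLimit D Ω L l ↔ 𝟙 L = ∑ j ∈ hfin.toFinset, l j ≫ (l j)† := by
  rw [isDaggerLimit_iff_forall_isComponentProj hcomp_zero hzero_comp hL hΩ,
    sum_eq_id_iff_forall_isComponentProj hcomp_add hadd_comp hcomp_zero hzero_comp hL hΩ hfin]
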